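/- arXiv:2305.04731 — 2 statements merged into one kernel-verified Lean document; each statement's English description precedes it below -/
import Mathlib

section
/- Define an M-diagram on 3n points to be a partition of {1,...,3n} into n triples (a_k,b_k,c_k), a_k < b_k < c_k, such that for any two triples (a1,b1,c1), (a2,b2,c2): the intervals of left arcs do not cross (i.e., not a1 < a2 < b1 < b2 and not a2 < a1 < b2 < b1) and the intervals of right arcs do not cross (i.e., not b1 < b2 < c1 < c2 and not b2 < b1 < c2 < c1). Then the map sending an M-diagram to its boundary word (position i labeled +, 0, or - according to whether i is a left, middle, or right endpoint of its triple) is injective. -/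
/-- An M-diagram on `3n` points: a partition of `Fin (3n)` into `n` triples,
recorded by assigning to each point `i` the left (`a i`), middle (`b i`) and
right (`c i`) endpoints of the triple containing `i`, such that no two left
arcs `(a,b)` cross and no two right arcs `(b,c)` cross. -/
structure MDiagram (n : ℕ) where
  a : Fin (3 * n) → Fin (3 * n)
  b : Fin (3 * n) → Fin (3 * n)
  c : Fin (3 * n) → Fin (3 * n)
  hab : ∀ i, a i < b i
  hbc : ∀ i, b i < c i
  mem_triple : ∀ i, i = a i ∨ i = b i ∨ i = c i
  coherent : ∀ i j, (j = a i ∨ j = b i ∨ j = c i) →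
    a j = a i ∧ b j = b i ∧ c j = c i
  noncrossL : ∀ i j, ¬ (a i < a j ∧ a j < b i ∧ b i < b j)
  noncrossR : ∀ i j, ¬ (b i < b j ∧ b j < c i ∧ c i < c j)

/-- The boundary word of an M-diagram: `+` (= `2 : Fin 3`) at left endpoints,
`0` (= `1`) at middle endpoints, `-` (= `0`) at right endpoints. -/
def mword {n : ℕ} (m : MDiagram n) : Fin (3 * n) → Fin 3 :=
  fun i => if i = m.a i then 2 else if i = m.b i then 1 else 0

lemma word_a_iff {n : ℕ} (m : MDiagram n) (i : Fin (3*n)) :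
    mword m i = 2 ↔ i = m.a i := by
  unfold mword
  split_ifs with h1 h2
  · exact ⟨fun _ => h1, fun _ => rfl⟩
  · exact ⟨fun hh => absurd hh (by decide), fun hh => absurd hh h1⟩
  · exact ⟨fun hh => absurd hh (by decide), fun hh => absurd hh h1⟩

lemma word_b_iff {n : ℕ} (m : MDiagram n) (i : Fin (3*n)) :
    mword m i = 1 ↔ i = m.b i := by
  have hab := m.hab i
  unfold mword
  split_ifs with h1 h2
  · refine ⟨fun hh => absurd hh (by decide), fun hh => ?_⟩
    rw [← h1, ← hh] at hab; exact absurd hab (lt_irrefl i)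
  · exact ⟨fun _ => h2, fun _ => rfl⟩
  · exact ⟨fun hh => absurd hh (by decide), fun hh => absurd hh h2⟩

lemma word_c_iff {n : ℕ} (m : MDiagram n) (i : Fin (3*n)) :
    mword m i = 0 ↔ i = m.c i := by
  have hab := m.hab i
  have hbc := m.hbc i
  have ht := m.mem_triple i
  unfold mword
  split_ifs with h1 h2
  · refine ⟨fun hh => absurd hh (by decide), fun hh => ?_⟩
    rw [← h1] at hab; rw [← hh] at hbc
    exact absurd (hab.trans hbc) (lt_irrefl i)
  · refine ⟨fun hh => absurd hh (by decide), fun hh => ?_⟩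
    rw [← h2] at hbc; rw [← hh] at hbc
    exact absurd hbc (lt_irrefl i)
  · refine ⟨fun _ => ?_, fun _ => rfl⟩
    rcases ht with h | h | h
    · exact absurd h h1
    · exact absurd h h2
    · exact h

lemma left_aux {n : ℕ} (m₁ m₂ : MDiagram n) (h : mword m₁ = mword m₂)
    (j : Fin (3*n)) (IH : ∀ j' : Fin (3*n), j' < j → mword m₁ j' = 1 → m₁.a j' = m₂.a j')
    (hj : mword m₁ j = 1) (hlt : m₁.a j < m₂.a j) : False := by
  set p₂ := m₂.a j with hp₂
  have hj2 : mword m₂ j = 1 := by rw [← congrFun h j]; exact hj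
  have hjb1 : j = m₁.b j := (word_b_iff m₁ j).1 hj
  have hjb2 : j = m₂.b j := (word_b_iff m₂ j).1 hj2
  -- p₂ is an a-point of m₂, hence of m₁
  have hco2 := m₂.coherent j p₂ (Or.inl rfl)
  have hp₂a2 : p₂ = m₂.a p₂ := by rw [hco2.1]
  have hwp₂ : mword m₁ p₂ = 2 := by
    rw [congrFun h p₂]; exact (word_a_iff m₂ p₂).2 hp₂a2
  have hp₂a1 : p₂ = m₁.a p₂ := (word_a_iff m₁ p₂).1 hwp₂
  set q := m₁.b p₂ with hq
  have hp₂j : p₂ < j := by rw [hp₂]; calc m₂.a j < m₂.b j := m₂.hab j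
                                      _ = j := hjb2.symm
  -- noncrossing: q ≤ j
  have hnc := m₁.noncrossL j p₂
  have hqj : q ≤ j := by
    by_contra hcon
    push_neg at hcon
    exact hnc ⟨by rw [← hp₂a1]; exact hlt, by rw [← hp₂a1, ← hjb1]; exact hp₂j,
      by rw [← hjb1]; exact hcon⟩
  have hqne : q ≠ j := by
    intro hqj'
    have hco1 := m₁.coherent p₂ j (Or.inr (Or.inl hqj'.symm))
    have : m₁.a j = p₂ := by rw [hco1.1, ← hp₂a1]
    rw [this] at hlt
    exact absurd hlt (lt_irrefl p₂)
  have hqlt : q < j := lt_of_le_of_ne hqj hqne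
  have hcoq := m₁.coherent p₂ q (Or.inr (Or.inl rfl))
  have hqb1 : q = m₁.b q := by rw [hcoq.2.1]
  have hwq : mword m₁ q = 1 := (word_b_iff m₁ q).2 hqb1
  have haq1 : m₁.a q = p₂ := by rw [hcoq.1, ← hp₂a1]
  have haq2 : m₂.a q = p₂ := by rw [← IH q hqlt hwq]; exact haq1
  -- in m₂ : b p₂ = q and b p₂ = j
  have hqb2 : q = m₂.b q := (word_b_iff m₂ q).1 (by rw [← congrFun h q]; exact hwq)
  have h1 := (m₂.coherent q p₂ (Or.inl haq2.symm)).2.1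
  have h2 := (m₂.coherent j p₂ (Or.inl rfl)).2.1
  rw [← hqb2] at h1
  rw [← hjb2] at h2
  rw [h1] at h2
  exact hqne h2

lemma right_aux {n : ℕ} (m₁ m₂ : MDiagram n) (h : mword m₁ = mword m₂)
    (j : Fin (3*n)) (IH : ∀ j' : Fin (3*n), j < j' → mword m₁ j' = 1 → m₁.c j' = m₂.c j')
    (hj : mword m₁ j = 1) (hlt : m₂.c j < m₁.c j) : False := by
  set c₂ := m₂.c j with hc₂
  have hj2 : mword m₂ j = 1 := by rw [← congrFun h j]; exact hj
  have hjb1 : j = m₁.b j := (word_b_iff m₁ j).1 hj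
  have hjb2 : j = m₂.b j := (word_b_iff m₂ j).1 hj2
  have hco2 := m₂.coherent j c₂ (Or.inr (Or.inr rfl))
  have hc₂c2 : c₂ = m₂.c c₂ := by rw [hco2.2.2]
  have hwc₂ : mword m₁ c₂ = 0 := by
    rw [congrFun h c₂]; exact (word_c_iff m₂ c₂).2 hc₂c2
  have hc₂c1 : c₂ = m₁.c c₂ := (word_c_iff m₁ c₂).1 hwc₂
  set q := m₁.b c₂ with hq
  have hjc₂ : j < c₂ := by rw [hc₂]; calc j = m₂.b j := hjb2
                                      _ < m₂.c j := m₂.hbc j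
  have hnc := m₁.noncrossR c₂ j
  have hqj : j ≤ q := by
    by_contra hcon
    push_neg at hcon
    exact hnc ⟨by rw [← hjb1]; exact hcon, by rw [← hjb1, ← hc₂c1]; exact hjc₂,
      by rw [← hc₂c1]; exact hlt⟩
  have hqne : q ≠ j := by
    intro hqj'
    have hco1 := m₁.coherent c₂ j (Or.inr (Or.inl hqj'.symm))
    have : m₁.c j = c₂ := by rw [hco1.2.2, ← hc₂c1]
    rw [this] at hlt
    exact absurd hlt (lt_irrefl c₂)
  have hqlt : j < q := lt_of_le_of_ne hqj (Ne.symm hqne)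
  have hcoq := m₁.coherent c₂ q (Or.inr (Or.inl rfl))
  have hqb1 : q = m₁.b q := by rw [hcoq.2.1]
  have hwq : mword m₁ q = 1 := (word_b_iff m₁ q).2 hqb1
  have hcq1 : m₁.c q = c₂ := by rw [hcoq.2.2, ← hc₂c1]
  have hcq2 : m₂.c q = c₂ := by rw [← IH q hqlt hwq]; exact hcq1
  have hqb2 : q = m₂.b q := (word_b_iff m₂ q).1 (by rw [← congrFun h q]; exact hwq)
  have h1 := (m₂.coherent q c₂ (Or.inr (Or.inr hcq2.symm))).2.1
  have h2 := (m₂.coherent j c₂ (Or.inr (Or.inr rfl))).2.1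
  rw [← hqb2] at h1
  rw [← hjb2] at h2
  rw [h1] at h2
  exact hqne h2

lemma left_eq {n : ℕ} (m₁ m₂ : MDiagram n) (h : mword m₁ = mword m₂) :
    ∀ j : Fin (3*n), mword m₁ j = 1 → m₁.a j = m₂.a j := by
  have key : ∀ k : ℕ, ∀ j : Fin (3*n), j.val < k → mword m₁ j = 1 → m₁.a j = m₂.a j := by
    intro k
    induction k with
    | zero => intro j hk; omega
    | succ k ih =>
      intro j hk hj
      rcases lt_trichotomy (m₁.a j) (m₂.a j) with hlt | heq | hgt
      · exact absurd hlt (fun hlt => left_aux m₁ m₂ h j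
          (fun j' hj' hw => ih j' (by omega) hw) hj hlt)
      · exact heq
      · exact absurd hgt (fun hgt => left_aux m₂ m₁ h.symm j
          (fun j' hj' hw => (ih j' (by omega) (by rw [congrFun h j']; exact hw)).symm)
          (by rw [← congrFun h j]; exact hj) hgt)
  exact fun j => key (j.val + 1) j (by omega)

lemma right_eq {n : ℕ} (m₁ m₂ : MDiagram n) (h : mword m₁ = mword m₂) :
    ∀ j : Fin (3*n), mword m₁ j = 1 → m₁.c j = m₂.c j := by
  have key : ∀ k : ℕ, ∀ j : Fin (3*n), 3*n - j.val ≤ k → mword m₁ j = 1 → m₁.c j = m₂.c j := by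
    intro k
    induction k with
    | zero => intro j hk; have := j.isLt; omega
    | succ k ih =>
      intro j hk hj
      rcases lt_trichotomy (m₂.c j) (m₁.c j) with hlt | heq | hgt
      · exact absurd hlt (fun hlt => right_aux m₁ m₂ h j
          (fun j' hj' hw => ih j' (by have := Fin.lt_def.mp hj'; omega) hw) hj hlt)
      · exact heq.symm
      · exact absurd hgt (fun hgt => right_aux m₂ m₁ h.symm j
          (fun j' hj' hw => (ih j' (by have := Fin.lt_def.mp hj'; omega)
            (by rw [congrFun h j']; exact hw)).symm)
          (by rw [← congrFun h j]; exact hj) hgt)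
  exact fun j => key (3*n) j (by omega)

lemma all_eq {n : ℕ} (m₁ m₂ : MDiagram n) (h : mword m₁ = mword m₂) (i : Fin (3*n)) :
    m₁.a i = m₂.a i ∧ m₁.b i = m₂.b i ∧ m₁.c i = m₂.c i := by
  rcases m₁.mem_triple i with hi | hi | hi
  · -- i is an a-point
    have hw : mword m₁ i = 2 := (word_a_iff m₁ i).2 hi
    have hi2 : i = m₂.a i := (word_a_iff m₂ i).1 (by rw [← congrFun h i]; exact hw)
    set j := m₁.b i with hj
    have hco := m₁.coherent i j (Or.inr (Or.inl rfl))
    have hjb1 : j = m₁.b j := by rw [hco.2.1]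
    have hwj : mword m₁ j = 1 := (word_b_iff m₁ j).2 hjb1
    have haj1 : m₁.a j = i := by rw [hco.1, ← hi]
    have haj2 : m₂.a j = i := by rw [← left_eq m₁ m₂ h j hwj]; exact haj1
    have hco2 := m₂.coherent j i (Or.inl haj2.symm)
    have hjb2 : j = m₂.b j := (word_b_iff m₂ j).1 (by rw [← congrFun h j]; exact hwj)
    refine ⟨by rw [← hi, ← hi2], ?_, ?_⟩
    · rw [hco2.2.1]; exact hjb2
    · rw [hco2.2.2, ← right_eq m₁ m₂ h j hwj, hco.2.2]
  · -- i is a b-point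
    have hw : mword m₁ i = 1 := (word_b_iff m₁ i).2 hi
    have hi2 : i = m₂.b i := (word_b_iff m₂ i).1 (by rw [← congrFun h i]; exact hw)
    exact ⟨left_eq m₁ m₂ h i hw, by rw [← hi, ← hi2], right_eq m₁ m₂ h i hw⟩
  · -- i is a c-point
    have hw : mword m₁ i = 0 := (word_c_iff m₁ i).2 hi
    have hi2 : i = m₂.c i := (word_c_iff m₂ i).1 (by rw [← congrFun h i]; exact hw)
    set j := m₁.b i with hj
    have hco := m₁.coherent i j (Or.inr (Or.inl rfl))
    have hjb1 : j = m₁.b j := by rw [hco.2.1]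
    have hwj : mword m₁ j = 1 := (word_b_iff m₁ j).2 hjb1
    have hcj1 : m₁.c j = i := by rw [hco.2.2, ← hi]
    have hcj2 : m₂.c j = i := by rw [← right_eq m₁ m₂ h j hwj]; exact hcj1
    have hco2 := m₂.coherent j i (Or.inr (Or.inr hcj2.symm))
    have hjb2 : j = m₂.b j := (word_b_iff m₂ j).1 (by rw [← congrFun h j]; exact hwj)
    refine ⟨?_, ?_, by rw [← hi, ← hi2]⟩
    · rw [hco2.1, ← left_eq m₁ m₂ h j hwj, hco.1]
    · rw [hco2.2.1]; exact hjb2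

/-- The map sending an M-diagram to its boundary word is injective. -/
theorem stmt10 (n : ℕ) (m₁ m₂ : MDiagram n) (h : mword m₁ = mword m₂) :
    m₁ = m₂ := by
  have ha : m₁.a = m₂.a := funext fun i => (all_eq m₁ m₂ h i).1
  have hb : m₁.b = m₂.b := funext fun i => (all_eq m₁ m₂ h i).2.1
  have hc : m₁.c = m₂.c := funext fun i => (all_eq m₁ m₂ h i).2.2
  cases m₁; cases m₂
  simp only at ha hb hc
  subst ha hb hc
  rfl
end

section
/- For every word w ∈ {+,0,-}^{3n} with exactly n of each letter such that every prefix contains at least as many +'s as 0's and at least as many 0's as -'s, there exists an M-diagram on 3n points whose boundary word is w; combined with injectivity, M-diagrams on 3n points are in bijection with standard Young tableaux of shape (n,n,n). -/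
/-- A standard Young tableau of rectangular shape `(n,n,n)`. -/
structure SYT3 (n : ℕ) where
  entry : Fin 3 → Fin n → Fin (3 * n)
  bij : Function.Bijective (fun p : Fin 3 × Fin n => entry p.1 p.2)
  row_inc : ∀ i : Fin 3, StrictMono (entry i)
  col_inc : ∀ j : Fin n, StrictMono (fun i : Fin 3 => entry i j)

/-- Number of occurrences of the letter `ℓ` among the first `k` letters of `w`. -/
def pcount {n : ℕ} (w : Fin (3 * n) → Fin 3) (k : ℕ) (ℓ : Fin 3) : ℕ :=
  (Finset.univ.filter (fun i : Fin (3 * n) => i.val < k ∧ w i = ℓ)).card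

/-- Lattice condition: every prefix has `#(+) ≥ #(0) ≥ #(-)`. -/
def IsLatticeWord {n : ℕ} (w : Fin (3 * n) → Fin 3) : Prop :=
  ∀ k : ℕ, pcount w k 1 ≤ pcount w k 2 ∧ pcount w k 0 ≤ pcount w k 1

/-!
A lattice word determines its M-diagram. Read `+`, `0` as opening and closing parentheses
(ignoring `-`), and likewise `0`, `-`; in each of the two subwords, the closer at `q` is matched
with the last opener `p < q` such that the segment strictly between `p` and `q` is balanced. The
prefix conditions make both matchings perfect and noncrossing, and chaining them gives the triples
of an M-diagram with boundary word `w`. Conversely, an arc of any noncrossing matching encloses a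
balanced segment, while a later opener inside the arc would enclose one closer too many; so the
arcs of an M-diagram are the greedy ones and the diagram is determined by its word. Recording the
positions of `+`, `0`, `-` as the three rows identifies lattice words with standard Young tableaux
of shape `(n,n,n)`, the prefix conditions being column strictness.
-/

open Finset

section PrefixCount

variable {n : ℕ} {w : Fin (3 * n) → Fin 3}

lemma pcount_mono {k k' : ℕ} (h : k ≤ k') (ℓ : Fin 3) : pcount w k ℓ ≤ pcount w k' ℓ :=
  card_le_card fun i hi => by
    simp only [mem_filter] at hi ⊢
    exact ⟨hi.1, by omega, hi.2.2⟩

lemma pcount_succ (k : ℕ) (ℓ : Fin 3) :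
    pcount w (k + 1) ℓ = pcount w k ℓ + #{i : Fin (3 * n) | i.val = k ∧ w i = ℓ} := by
  rw [pcount, pcount, ← card_union_of_disjoint, ← filter_or]
  · congr 1; ext i; simp only [mem_filter, mem_univ, true_and]; omega
  · exact disjoint_filter.2 fun i _ h h' => by omega

lemma pcount_succ_le (k : ℕ) (ℓ : Fin 3) : pcount w (k + 1) ℓ ≤ pcount w k ℓ + 1 := by
  rw [pcount_succ]
  gcongr
  exact card_le_one.2 fun i hi j hj => by simp only [mem_filter] at hi hj; omega

lemma pcount_succ_of_eq {k : ℕ} (hk : k < 3 * n) {ℓ : Fin 3} (h : w ⟨k, hk⟩ = ℓ) :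
    pcount w (k + 1) ℓ = pcount w k ℓ + 1 := by
  rw [pcount_succ, card_eq_one.2 ⟨⟨k, hk⟩, ?_⟩]
  ext i
  simp only [mem_filter, mem_univ, true_and, mem_singleton]
  exact ⟨fun hi => Fin.ext hi.1, fun hi => hi ▸ ⟨rfl, h⟩⟩

lemma pcount_succ_of_ne {k : ℕ} {ℓ : Fin 3} (h : ∀ hk : k < 3 * n, w ⟨k, hk⟩ ≠ ℓ) :
    pcount w (k + 1) ℓ = pcount w k ℓ := by
  rw [pcount_succ, card_eq_zero.2, add_zero]
  exact filter_eq_empty_iff.2 fun i _ ⟨hi, hw⟩ => h (hi ▸ i.isLt) (by simpa [← hi] using hw)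

def positions (w : Fin (3 * n) → Fin 3) (ℓ : Fin 3) : Finset (Fin (3 * n)) := {i | w i = ℓ}

@[simp]
lemma mem_positions {ℓ : Fin 3} {i : Fin (3 * n)} : i ∈ positions w ℓ ↔ w i = ℓ := by
  simp [positions]

def arc (w : Fin (3 * n) → Fin 3) (ℓ : Fin 3) (p q : Fin (3 * n)) : Finset (Fin (3 * n)) :=
  {i | p < i ∧ i < q ∧ w i = ℓ}

@[simp]
lemma mem_arc {ℓ : Fin 3} {p q i : Fin (3 * n)} : i ∈ arc w ℓ p q ↔ p < i ∧ i < q ∧ w i = ℓ := by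
  simp [arc]

lemma pcount_eq_add_card_arc {p q : Fin (3 * n)} (hpq : p < q) (ℓ : Fin 3) :
    pcount w q ℓ = pcount w (p + 1) ℓ + #(arc w ℓ p q) := by
  rw [pcount, pcount, arc, ← card_union_of_disjoint, ← filter_or]
  · congr 1; ext i; simp only [mem_filter, mem_univ, true_and, Fin.lt_def] at hpq ⊢; omega
  · exact disjoint_filter.2 fun i _ h h' => by rw [Fin.lt_def] at h'; omega

lemma pcount_eq_card_filter_lt (q : Fin (3 * n)) (ℓ : Fin 3) :
    pcount w q ℓ = #((positions w ℓ).filter (· < q)) := by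
  rw [pcount, positions, filter_filter]
  congr 1; ext i; simp only [mem_filter, mem_univ, true_and, Fin.lt_def]; exact and_comm

def HasRectangularContent (w : Fin (3 * n) → Fin 3) : Prop :=
  ∀ ℓ : Fin 3, #(positions w ℓ) = n

def PrefixDominates (w : Fin (3 * n) → Fin 3) (hi lo : Fin 3) : Prop :=
  ∀ k, pcount w k lo ≤ pcount w k hi

lemma IsLatticeWord.prefixDominates_two_one (h : IsLatticeWord w) : PrefixDominates w 2 1 :=
  fun k => (h k).1

lemma IsLatticeWord.prefixDominates_one_zero (h : IsLatticeWord w) : PrefixDominates w 1 0 :=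
  fun k => (h k).2

end PrefixCount

abbrev LatticeWord (n : ℕ) : Type :=
  {w : Fin (3 * n) → Fin 3 // IsLatticeWord w ∧ HasRectangularContent w}

theorem exists_step_up {F : ℕ → ℤ} (hF : ∀ k, F (k + 1) ≤ F k + 1) {s t : ℕ} (hst : s ≤ t)
    {v : ℤ} (hsv : F s < v) (hvt : v ≤ F t) :
    ∃ r, s ≤ r ∧ r < t ∧ F r + 1 = v ∧ F (r + 1) = v := by
  induction t, hst using Nat.le_induction with
  | base => omega
  | succ t hst ih =>
    by_cases hv : v ≤ F t
    · obtain ⟨r, hsr, hrt, hr⟩ := ih hv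
      exact ⟨r, hsr, by omega, hr⟩
    · have := hF t
      exact ⟨t, hst, by omega, by omega, by omega⟩

namespace BallotMatching

variable {n : ℕ} (w : Fin (3 * n) → Fin 3) (hi lo : Fin 3)

def height (k : ℕ) : ℤ := pcount w k hi - pcount w k lo

def openers (q : Fin (3 * n)) : Finset (Fin (3 * n)) :=
  {p | p < q ∧ w p = hi ∧ height w hi lo p + 1 = height w hi lo q}

noncomputable def partner (q : Fin (3 * n)) : Fin (3 * n) :=
  if h : (openers w hi lo q).Nonempty then (openers w hi lo q).max' h else q

variable {w hi lo}

lemma mem_openers {p q : Fin (3 * n)} :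
    p ∈ openers w hi lo q ↔ p < q ∧ w p = hi ∧ height w hi lo p + 1 = height w hi lo q := by
  simp [openers]

lemma le_partner {p q : Fin (3 * n)} (hp : p ∈ openers w hi lo q) : p ≤ partner w hi lo q := by
  rw [partner, dif_pos ⟨p, hp⟩]
  exact le_max' _ _ hp

lemma partner_mem_of_mem {p q : Fin (3 * n)} (hp : p ∈ openers w hi lo q) :
    partner w hi lo q ∈ openers w hi lo q := by
  rw [partner, dif_pos ⟨p, hp⟩]
  exact max'_mem _ _

lemma height_zero : height w hi lo 0 = 0 := by simp [height, pcount]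

lemma height_succ_le (k : ℕ) : height w hi lo (k + 1) ≤ height w hi lo k + 1 := by
  have := pcount_succ_le (w := w) k hi
  have := pcount_mono (w := w) (Nat.le_add_right k 1) lo
  simp only [height]; omega

lemma exists_eq_hi_of_height_lt_succ {k : ℕ} (h : height w hi lo k < height w hi lo (k + 1)) :
    ∃ hk : k < 3 * n, w ⟨k, hk⟩ = hi := by
  by_contra! hne
  have := pcount_succ_of_ne hne
  have := pcount_mono (w := w) (Nat.le_add_right k 1) lo
  simp only [height] at h; omega

lemma height_succ_of_eq_hi (hne : hi ≠ lo) {p : Fin (3 * n)} (hp : w p = hi) :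
    height w hi lo (p + 1) = height w hi lo p + 1 := by
  have := pcount_succ_of_eq p.isLt hp
  have := pcount_succ_of_ne (w := w) (k := p) fun _ h => hne (hp.symm.trans h)
  simp only [height]; omega

lemma height_succ_of_eq_lo (hne : hi ≠ lo) {q : Fin (3 * n)} (hq : w q = lo) :
    height w hi lo (q + 1) = height w hi lo q - 1 := by
  have := pcount_succ_of_eq q.isLt hq
  have := pcount_succ_of_ne (w := w) (k := q) fun _ h => hne (h.symm.trans hq)
  simp only [height]; omega

lemma mem_openers_iff_card_arc (hne : hi ≠ lo) {p q : Fin (3 * n)} (hpq : p < q)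
    (hp : w p = hi) : p ∈ openers w hi lo q ↔ #(arc w hi p q) = #(arc w lo p q) := by
  have := height_succ_of_eq_hi (lo := lo) hne hp
  have := pcount_eq_add_card_arc (w := w) hpq hi
  have := pcount_eq_add_card_arc (w := w) hpq lo
  simp only [mem_openers, height] at *
  omega

lemma exists_mem_openers {s : ℕ} {q : Fin (3 * n)} (hsq : s ≤ q)
    (h : height w hi lo s < height w hi lo q) : ∃ p ∈ openers w hi lo q, s ≤ p.val := by
  obtain ⟨r, hsr, hrq, hr, hr'⟩ := exists_step_up height_succ_le hsq h le_rfl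
  have hstep : height w hi lo r < height w hi lo (r + 1) := by omega
  obtain ⟨hrn, hw⟩ := exists_eq_hi_of_height_lt_succ hstep
  exact ⟨⟨r, hrn⟩, mem_openers.2 ⟨hrq, hw, hr⟩, hsr⟩

lemma height_le_of_partner_lt {q : Fin (3 * n)} {k : ℕ} (hk : partner w hi lo q < k)
    (hkq : k ≤ q) : height w hi lo q ≤ height w hi lo k := by
  by_contra! h
  obtain ⟨p, hp, hkp⟩ := exists_mem_openers hkq h
  have := le_partner hp
  rw [Fin.le_def] at this; omega

lemma partner_mem (hne : hi ≠ lo) (hdom : PrefixDominates w hi lo) {q : Fin (3 * n)}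
    (hq : w q = lo) : partner w hi lo q ∈ openers w hi lo q := by
  have hpos : 0 < height w hi lo q := by
    have h := height_succ_of_eq_lo hne hq
    have := hdom (q + 1)
    simp only [height] at h ⊢; omega
  obtain ⟨p, hp, -⟩ := exists_mem_openers (Nat.zero_le _) (height_zero.trans_lt hpos)
  exact partner_mem_of_mem hp

lemma partner_lt (hne : hi ≠ lo) (hdom : PrefixDominates w hi lo) {q : Fin (3 * n)}
    (hq : w q = lo) : partner w hi lo q < q :=
  (mem_openers.1 (partner_mem hne hdom hq)).1

lemma partner_injOn (hne : hi ≠ lo) (hdom : PrefixDominates w hi lo) :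
    Set.InjOn (partner w hi lo) {q | w q = lo} := by
  intro q hq q' hq' h
  wlog hlt : q < q' generalizing q q'
  · rcases (not_lt.1 hlt).lt_or_eq with hlt | heq
    exacts [(this hq' hq h.symm hlt).symm, heq.symm]
  obtain ⟨hpq, -, hp⟩ := mem_openers.1 (partner_mem hne hdom hq)
  obtain ⟨-, -, hp'⟩ := mem_openers.1 (partner_mem hne hdom hq')
  have := height_le_of_partner_lt (k := q + 1) (h ▸ Nat.lt_succ_of_lt hpq) hlt
  have := height_succ_of_eq_lo hne hq
  rw [h] at hp
  omega

lemma partner_noncrossing (hne : hi ≠ lo) (hdom : PrefixDominates w hi lo)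
    {q q' : Fin (3 * n)} (hq' : w q' = lo) :
    ¬ (partner w hi lo q < partner w hi lo q' ∧ partner w hi lo q' < q ∧ q < q') := by
  rintro ⟨h₁, h₂, h₃⟩
  obtain ⟨-, -, hp'⟩ := mem_openers.1 (partner_mem hne hdom hq')
  have := height_le_of_partner_lt h₁ h₂.le
  have := height_le_of_partner_lt h₂ h₃.le
  omega

noncomputable def partnerEquiv (hne : hi ≠ lo) (hdom : PrefixDominates w hi lo)
    (hcard : #(positions w lo) = #(positions w hi)) : {i // w i = lo} ≃ {i // w i = hi} :=
  Equiv.ofBijective (fun q => ⟨partner w hi lo q, (mem_openers.1 (partner_mem hne hdom q.2)).2.1⟩)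
    ((Fintype.bijective_iff_injective_and_card _).2
      ⟨fun q q' h => Subtype.ext (partner_injOn hne hdom q.2 q'.2 (congrArg Subtype.val h)),
        by rw [Fintype.card_subtype, Fintype.card_subtype]; exact hcard⟩)

end BallotMatching

open BallotMatching

structure NoncrossingMatching {n : ℕ} (w : Fin (3 * n) → Fin 3) (hi lo : Fin 3) where
  opener : Fin (3 * n) → Fin (3 * n)
  closer : Fin (3 * n) → Fin (3 * n)
  opener_letter : ∀ q, w q = lo → w (opener q) = hi
  closer_letter : ∀ p, w p = hi → w (closer p) = lo
  lt_closer : ∀ p, w p = hi → p < closer p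
  closer_opener : ∀ q, w q = lo → closer (opener q) = q
  opener_closer : ∀ p, w p = hi → opener (closer p) = p
  noncrossing : ∀ q q', w q = lo → w q' = lo → ¬ (opener q < opener q' ∧ opener q' < q ∧ q < q')

namespace NoncrossingMatching

variable {n : ℕ} {w : Fin (3 * n) → Fin 3} {hi lo : Fin 3} (M : NoncrossingMatching w hi lo)
  {q : Fin (3 * n)}

lemma closer_injOn : Set.InjOn M.closer {p | w p = hi} := fun p hp p' hp' h => by
  rw [← M.opener_closer p hp, h, M.opener_closer p' hp']

lemma opener_injOn : Set.InjOn M.opener {q | w q = lo} := fun q hq q' hq' h => by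
  rw [← M.closer_opener q hq, h, M.closer_opener q' hq']

lemma opener_lt (hq : w q = lo) : M.opener q < q :=
  (M.lt_closer _ (M.opener_letter q hq)).trans_eq (M.closer_opener q hq)

lemma card_letter_eq (M : NoncrossingMatching w hi lo) : #(positions w hi) = #(positions w lo) :=
  card_nbij' M.closer M.opener (fun p hp => by simpa using M.closer_letter p (by simpa using hp))
    (fun q hq => by simpa using M.opener_letter q (by simpa using hq))
    (fun p hp => M.opener_closer p (by simpa using hp))
    (fun q hq => M.closer_opener q (by simpa using hq))

lemma prefixDominates (M : NoncrossingMatching w hi lo) : PrefixDominates w hi lo := fun k =>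
  card_le_card_of_injOn M.opener
    (fun q hq => by
      simp only [coe_filter, mem_univ, true_and, Set.mem_ofPred_eq] at hq ⊢
      exact ⟨(Fin.lt_def.1 (M.opener_lt hq.2)).trans hq.1, M.opener_letter q hq.2⟩)
    (M.opener_injOn.mono fun _ hq => by simp_all)

lemma closer_mem_arc (hq : w q = lo) {z o : Fin (3 * n)} (hz : M.opener q ≤ z)
    (ho : o ∈ arc w hi z q) : M.closer o ∈ arc w lo z q := by
  obtain ⟨hzo, hoq, ho⟩ := mem_arc.1 ho
  refine mem_arc.2 ⟨hzo.trans (M.lt_closer o ho), lt_of_le_of_ne (not_lt.1 fun h => ?_)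
    fun h => ?_, M.closer_letter o ho⟩
  · refine M.noncrossing q (M.closer o) hq (M.closer_letter o ho) ⟨?_, ?_, h⟩ <;>
      rw [M.opener_closer o ho]
    exacts [hz.trans_lt hzo, hoq]
  · rw [← h, M.opener_closer o ho] at hz
    exact hz.not_gt hzo

lemma opener_mem_arc (hq : w q = lo) {r : Fin (3 * n)} (hr : r ∈ arc w lo (M.opener q) q) :
    M.opener r ∈ arc w hi (M.opener q) q := by
  obtain ⟨h₁, h₂, hr⟩ := mem_arc.1 hr
  refine mem_arc.2 ⟨lt_of_le_of_ne (not_lt.1 fun h => M.noncrossing r q hr hq ⟨h, h₁, h₂⟩)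
    fun h => h₂.ne (M.opener_injOn hr hq h.symm), (M.opener_lt hr).trans h₂, M.opener_letter r hr⟩

lemma card_arc_opener (hq : w q = lo) :
    #(arc w hi (M.opener q) q) = #(arc w lo (M.opener q) q) :=
  le_antisymm
    (card_le_card_of_injOn M.closer (fun _ => M.closer_mem_arc hq le_rfl)
      (M.closer_injOn.mono fun _ ho => (mem_arc.1 ho).2.2))
    (card_le_card_of_injOn M.opener (fun _ => M.opener_mem_arc hq)
      (M.opener_injOn.mono fun _ hr => (mem_arc.1 hr).2.2))

/-- Inside the arc ending at `q`, the closers of the openers after `p` stay inside, and the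
closer of `p` itself is one more closer: the arc from `p` to `q` is unbalanced. -/
lemma notMem_openers (hne : hi ≠ lo) (hq : w q = lo) {p : Fin (3 * n)} (hp : w p = hi)
    (h₁ : M.opener q < p) (h₂ : p < q) : p ∉ openers w hi lo q := by
  have hsub : (arc w hi p q).image M.closer ⊆ arc w lo p q := by
    simpa only [image_subset_iff] using fun o => M.closer_mem_arc hq h₁.le
  have hssub : (arc w hi p q).image M.closer ⊂ arc w lo p q := by
    refine (ssubset_iff_of_subset hsub).2 ⟨M.closer p, ?_, fun hx => ?_⟩
    · exact mem_arc.2 ⟨M.lt_closer p hp,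
        (mem_arc.1 (M.closer_mem_arc hq le_rfl (mem_arc.2 ⟨h₁, h₂, hp⟩))).2.1, M.closer_letter p hp⟩
    · obtain ⟨o, ho, he⟩ := mem_image.1 hx
      exact (mem_arc.1 ho).1.ne (M.closer_injOn hp (mem_arc.1 ho).2.2 he.symm)
  rw [mem_openers_iff_card_arc hne h₂ hp, ← card_image_of_injOn
    (M.closer_injOn.mono fun o ho => (mem_arc.1 ho).2.2)]
  exact (card_lt_card hssub).ne

theorem opener_eq_partner (hne : hi ≠ lo) (hq : w q = lo) : M.opener q = partner w hi lo q := by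
  have hmem : M.opener q ∈ openers w hi lo q :=
    (mem_openers_iff_card_arc hne (M.opener_lt hq) (M.opener_letter q hq)).2 (M.card_arc_opener hq)
  refine le_antisymm (le_partner hmem) (not_lt.1 fun h => ?_)
  obtain ⟨hlt, hw, -⟩ := mem_openers.1 (partner_mem_of_mem hmem)
  exact M.notMem_openers hne hq hw h hlt (partner_mem_of_mem hmem)

end NoncrossingMatching

namespace MDiagram

variable {n : ℕ}

section

variable (m : MDiagram n) (i : Fin (3 * n))

lemma a_a : m.a (m.a i) = m.a i := (m.coherent i _ (Or.inl rfl)).1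
lemma b_a : m.b (m.a i) = m.b i := (m.coherent i _ (Or.inl rfl)).2.1
lemma a_b : m.a (m.b i) = m.a i := (m.coherent i _ (Or.inr (Or.inl rfl))).1
lemma b_b : m.b (m.b i) = m.b i := (m.coherent i _ (Or.inr (Or.inl rfl))).2.1
lemma c_b : m.c (m.b i) = m.c i := (m.coherent i _ (Or.inr (Or.inl rfl))).2.2
lemma b_c : m.b (m.c i) = m.b i := (m.coherent i _ (Or.inr (Or.inr rfl))).2.1
lemma c_c : m.c (m.c i) = m.c i := (m.coherent i _ (Or.inr (Or.inr rfl))).2.2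

lemma mword_eq_two_iff : mword m i = 2 ↔ i = m.a i := by
  unfold mword
  split_ifs with ha hb
  exacts [iff_of_true rfl ha, iff_of_false (by decide) ha, iff_of_false (by decide) ha]

lemma mword_eq_one_iff : mword m i = 1 ↔ i = m.b i := by
  unfold mword
  split_ifs with ha hb
  exacts [iff_of_false (by decide) fun hb => (ha.trans_lt (m.hab i)).ne hb, iff_of_true rfl hb,
    iff_of_false (by decide) hb]

lemma mword_eq_zero_iff : mword m i = 0 ↔ i = m.c i := by
  unfold mword
  split_ifs with ha hb
  exacts [iff_of_false (by decide) fun hc => (ha.trans_lt ((m.hab i).trans (m.hbc i))).ne hc,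
    iff_of_false (by decide) fun hc => (hb.trans_lt (m.hbc i)).ne hc,
    iff_of_true rfl (((m.mem_triple i).resolve_left ha).resolve_left hb)]

lemma mword_a : mword m (m.a i) = 2 := (m.mword_eq_two_iff _).2 (m.a_a i).symm
lemma mword_b : mword m (m.b i) = 1 := (m.mword_eq_one_iff _).2 (m.b_b i).symm
lemma mword_c : mword m (m.c i) = 0 := (m.mword_eq_zero_iff _).2 (m.c_c i).symm

def leftMatching : NoncrossingMatching (mword m) 2 1 where
  opener := m.a
  closer := m.b
  opener_letter q _ := m.mword_a q
  closer_letter p _ := m.mword_b p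
  lt_closer p hp := ((m.mword_eq_two_iff p).1 hp).trans_lt (m.hab p)
  closer_opener q hq := (m.b_a q).trans ((m.mword_eq_one_iff q).1 hq).symm
  opener_closer p hp := (m.a_b p).trans ((m.mword_eq_two_iff p).1 hp).symm
  noncrossing q q' hq hq' := by
    simpa only [← (m.mword_eq_one_iff _).1 hq, ← (m.mword_eq_one_iff _).1 hq'] using
      m.noncrossL q q'

def rightMatching : NoncrossingMatching (mword m) 1 0 where
  opener := m.b
  closer := m.c
  opener_letter q _ := m.mword_b q
  closer_letter p _ := m.mword_c p
  lt_closer p hp := ((m.mword_eq_one_iff p).1 hp).trans_lt (m.hbc p)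
  closer_opener q hq := (m.c_b q).trans ((m.mword_eq_zero_iff q).1 hq).symm
  opener_closer p hp := (m.b_c p).trans ((m.mword_eq_one_iff p).1 hp).symm
  noncrossing q q' hq hq' := by
    simpa only [← (m.mword_eq_zero_iff _).1 hq, ← (m.mword_eq_zero_iff _).1 hq'] using
      m.noncrossR q q'

variable {i}

lemma a_eq_partner (h : mword m i = 1) : m.a i = partner (mword m) 2 1 i :=
  m.leftMatching.opener_eq_partner (by decide) h

lemma b_eq_partner (h : mword m i = 0) : m.b i = partner (mword m) 1 0 i :=
  m.rightMatching.opener_eq_partner (by decide) h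

lemma mword_isLatticeWord : IsLatticeWord (mword m) := fun k =>
  ⟨m.leftMatching.prefixDominates k, m.rightMatching.prefixDominates k⟩

lemma mword_hasRectangularContent : HasRectangularContent (mword m) := by
  have h₂₁ := m.leftMatching.card_letter_eq
  have h₁₀ := m.rightMatching.card_letter_eq
  have hsum : ∑ ℓ : Fin 3, #(positions (mword m) ℓ) = 3 * n :=
    (card_eq_sum_card_fiberwise fun i _ => mem_univ (mword m i)).symm.trans (by simp)
  rw [Fin.sum_univ_three] at hsum
  intro ℓ
  fin_cases ℓ <;> simp only [Fin.zero_eta, Fin.mk_one, Fin.reduceFinMk] <;> omega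

end

section OfLatticeWord

variable {w : Fin (3 * n) → Fin 3} (hlat : IsLatticeWord w) (hcnt : HasRectangularContent w)

noncomputable def middleToLeft : {i // w i = 1} ≃ {i // w i = 2} :=
  partnerEquiv (by decide) hlat.prefixDominates_two_one ((hcnt 1).trans (hcnt 2).symm)

noncomputable def rightToMiddle : {i // w i = 0} ≃ {i // w i = 1} :=
  partnerEquiv (by decide) hlat.prefixDominates_one_zero ((hcnt 0).trans (hcnt 1).symm)

noncomputable def middleOf (i : Fin (3 * n)) : {j // w j = 1} :=
  if h₂ : w i = 2 then (middleToLeft hlat hcnt).symm ⟨i, h₂⟩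
  else if h₁ : w i = 1 then ⟨i, h₁⟩
  else rightToMiddle hlat hcnt ⟨i, by omega⟩

variable {hlat hcnt}

lemma middleOf_of_eq_two {i : Fin (3 * n)} (h : w i = 2) :
    middleOf hlat hcnt i = (middleToLeft hlat hcnt).symm ⟨i, h⟩ :=
  dif_pos h

lemma middleOf_of_eq_one {i : Fin (3 * n)} (h : w i = 1) : middleOf hlat hcnt i = ⟨i, h⟩ := by
  simp [middleOf, h]

lemma middleOf_of_eq_zero {i : Fin (3 * n)} (h : w i = 0) :
    middleOf hlat hcnt i = rightToMiddle hlat hcnt ⟨i, h⟩ := by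
  simp [middleOf, h]

lemma middleToLeft_apply (x : {i // w i = 1}) :
    (middleToLeft hlat hcnt x : Fin (3 * n)) = partner w 2 1 x :=
  rfl

lemma rightToMiddle_apply (x : {i // w i = 0}) :
    (rightToMiddle hlat hcnt x : Fin (3 * n)) = partner w 1 0 x :=
  rfl

lemma partner_rightToMiddle_symm (x : {i // w i = 1}) :
    partner w 1 0 ((rightToMiddle hlat hcnt).symm x) = x :=
  congrArg Subtype.val ((rightToMiddle hlat hcnt).apply_symm_apply x)

@[simp]
lemma middleOf_middleToLeft (x : {i // w i = 1}) :
    middleOf hlat hcnt (middleToLeft hlat hcnt x) = x := by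
  simp [middleOf_of_eq_two (middleToLeft hlat hcnt x).2]

@[simp]
lemma middleOf_val (x : {i // w i = 1}) : middleOf hlat hcnt x = x :=
  middleOf_of_eq_one x.2

@[simp]
lemma middleOf_rightToMiddle_symm (x : {i // w i = 1}) :
    middleOf hlat hcnt ((rightToMiddle hlat hcnt).symm x) = x := by
  simp [middleOf_of_eq_zero ((rightToMiddle hlat hcnt).symm x).2]

variable (hlat hcnt)

noncomputable def ofLatticeWord : MDiagram n where
  a i := middleToLeft hlat hcnt (middleOf hlat hcnt i)
  b i := middleOf hlat hcnt i
  c i := (rightToMiddle hlat hcnt).symm (middleOf hlat hcnt i)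
  hab i := partner_lt (by decide) hlat.prefixDominates_two_one (middleOf hlat hcnt i).2
  hbc i := by
    rw (occs := .pos [1]) [← partner_rightToMiddle_symm (hlat := hlat) (hcnt := hcnt)]
    exact partner_lt (by decide) hlat.prefixDominates_one_zero ((rightToMiddle hlat hcnt).symm _).2
  mem_triple i := by
    rcases (by omega : w i = 2 ∨ w i = 1 ∨ w i = 0) with h | h | h
    · simp [middleOf_of_eq_two h]
    · simp [middleOf_of_eq_one h]
    · simp [middleOf_of_eq_zero h]
  coherent i j hj := by
    suffices middleOf hlat hcnt j = middleOf hlat hcnt i by simp only [this, and_self]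
    rcases hj with rfl | rfl | rfl <;> simp
  noncrossL i j := by
    simpa only [middleToLeft_apply] using
      partner_noncrossing (by decide) hlat.prefixDominates_two_one (middleOf hlat hcnt j).2
  noncrossR i j := by
    simpa only [partner_rightToMiddle_symm] using
      partner_noncrossing (q := ((rightToMiddle hlat hcnt).symm (middleOf hlat hcnt i)))
        (by decide) hlat.prefixDominates_one_zero ((rightToMiddle hlat hcnt).symm _).2

lemma mword_ofLatticeWord : mword (ofLatticeWord hlat hcnt) = w := by
  funext i
  rcases (by omega : w i = 2 ∨ w i = 1 ∨ w i = 0) with h | h | h <;> rw [h]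
  · exact (mword_eq_two_iff _ i).2 (by simp [ofLatticeWord, middleOf_of_eq_two h])
  · exact (mword_eq_one_iff _ i).2 (by simp [ofLatticeWord, middleOf_of_eq_one h])
  · exact (mword_eq_zero_iff _ i).2 (by simp [ofLatticeWord, middleOf_of_eq_zero h])

end OfLatticeWord

lemma ext {m m' : MDiagram n} (ha : m.a = m'.a) (hb : m.b = m'.b) (hc : m.c = m'.c) :
    m = m' := by
  cases m; cases m'; simp_all

lemma ofLatticeWord_mword (m : MDiagram n) :
    ofLatticeWord m.mword_isLatticeWord m.mword_hasRectangularContent = m := by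
  set hlat := m.mword_isLatticeWord
  set hcnt := m.mword_hasRectangularContent
  have hb (i : Fin (3 * n)) : (middleOf hlat hcnt i : Fin (3 * n)) = m.b i := by
    rcases (by omega : mword m i = 2 ∨ mword m i = 1 ∨ mword m i = 0) with h | h | h
    · have : middleToLeft hlat hcnt ⟨m.b i, m.mword_b i⟩ = ⟨i, h⟩ := Subtype.ext <| by
        rw [middleToLeft_apply, ← m.a_eq_partner (m.mword_b i), a_b]
        exact ((m.mword_eq_two_iff i).1 h).symm
      rw [middleOf_of_eq_two h, ← this, Equiv.symm_apply_apply]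
    · rw [middleOf_of_eq_one h]
      exact (m.mword_eq_one_iff i).1 h
    · rw [middleOf_of_eq_zero h, rightToMiddle_apply, m.b_eq_partner h]
  refine ext (funext fun i => ?_) (funext hb) (funext fun i => ?_)
  · show partner (mword m) 2 1 (middleOf hlat hcnt i) = m.a i
    rw [hb, ← m.a_eq_partner (m.mword_b i), a_b]
  · have : rightToMiddle hlat hcnt ⟨m.c i, m.mword_c i⟩ = middleOf hlat hcnt i := Subtype.ext <| by
      rw [rightToMiddle_apply, ← m.b_eq_partner (m.mword_c i), b_c, hb]
    show ((rightToMiddle hlat hcnt).symm (middleOf hlat hcnt i) : Fin (3 * n)) = m.c i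
    rw [← this, Equiv.symm_apply_apply]

noncomputable def equivLatticeWord : MDiagram n ≃ LatticeWord n where
  toFun m := ⟨mword m, m.mword_isLatticeWord, m.mword_hasRectangularContent⟩
  invFun w := ofLatticeWord w.2.1 w.2.2
  left_inv := ofLatticeWord_mword
  right_inv w := Subtype.ext (mword_ofLatticeWord w.2.1 w.2.2)

end MDiagram

lemma Finset.card_filter_lt_orderEmbOfFin {α : Type*} [LinearOrder α] (s : Finset α) {k : ℕ}
    (h : #s = k) (j : Fin k) : #(s.filter (· < s.orderEmbOfFin h j)) = j := by
  have : s.filter (· < s.orderEmbOfFin h j) = (Iio j).map (s.orderEmbOfFin h).toEmbedding := by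
    ext x
    simp only [mem_filter, mem_map, mem_Iio, RelEmbedding.coe_toEmbedding]
    constructor
    · rintro ⟨hx, hlt⟩
      obtain ⟨i, rfl⟩ : x ∈ Set.range (s.orderEmbOfFin h) := by rw [range_orderEmbOfFin]; exact hx
      exact ⟨i, (s.orderEmbOfFin h).lt_iff_lt.1 hlt, rfl⟩
    · rintro ⟨i, hi, rfl⟩
      exact ⟨orderEmbOfFin_mem s h i, (s.orderEmbOfFin h).lt_iff_lt.2 hi⟩
  rw [this, card_map, Fin.card_Iio]

lemma Finset.orderEmbOfFin_lt_of_lt_card_filter {α : Type*} [LinearOrder α] (s : Finset α)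
    {k : ℕ} (h : #s = k) (j : Fin k) {x : α} (hj : j.val < #(s.filter (· < x))) :
    s.orderEmbOfFin h j < x := by
  by_contra! hx
  have : #(s.filter (· < x)) ≤ #(s.filter (· < s.orderEmbOfFin h j)) :=
    card_le_card fun y hy => by
      simp only [mem_filter] at hy ⊢
      exact ⟨hy.1, hy.2.trans_le hx⟩
  rw [card_filter_lt_orderEmbOfFin] at this
  omega

lemma PrefixDominates.orderEmbOfFin_lt {n : ℕ} {w : Fin (3 * n) → Fin 3} {hi lo : Fin 3}
    (hne : hi ≠ lo) (hdom : PrefixDominates w hi lo) {k : ℕ} (hhi : #(positions w hi) = k)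
    (hlo : #(positions w lo) = k) (j : Fin k) :
    (positions w hi).orderEmbOfFin hhi j < (positions w lo).orderEmbOfFin hlo j := by
  set q := (positions w lo).orderEmbOfFin hlo j
  have hq : w q = lo := mem_positions.1 (orderEmbOfFin_mem _ hlo j)
  have hlo_q : pcount w q lo = j := by
    rw [pcount_eq_card_filter_lt, card_filter_lt_orderEmbOfFin]
  have := hdom (q + 1)
  rw [pcount_succ_of_eq q.isLt hq,
    pcount_succ_of_ne (k := q) fun _ h => hne (h.symm.trans hq)] at this
  exact orderEmbOfFin_lt_of_lt_card_filter _ hhi j (by rw [← pcount_eq_card_filter_lt]; omega)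

namespace SYT3

variable {n : ℕ}

lemma ext {T T' : SYT3 n} (h : T.entry = T'.entry) : T = T' := by
  cases T; cases T'; simp_all

/-- Row `r` lists the positions of the letter `r.rev` (`+`, `0`, `-` for rows `0`, `1`, `2`). -/
noncomputable def ofLatticeWord {w : Fin (3 * n) → Fin 3} (hlat : IsLatticeWord w)
    (hcnt : HasRectangularContent w) : SYT3 n where
  entry r := (positions w r.rev).orderEmbOfFin (hcnt r.rev)
  bij := by
    refine (Fintype.bijective_iff_injective_and_card _).2 ⟨fun ⟨r, j⟩ ⟨r', j'⟩ h => ?_, by simp⟩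
    have hr : r = r' := Fin.rev_inj.1 <|
      (mem_positions.1 (orderEmbOfFin_mem _ _ j)).symm.trans
        ((congrArg w h).trans (mem_positions.1 (orderEmbOfFin_mem _ _ j')))
    subst hr
    exact Prod.ext rfl ((orderEmbOfFin _ _).injective h)
  row_inc r := (orderEmbOfFin _ _).strictMono
  col_inc j := Fin.strictMono_iff_lt_succ.2 fun r => by
    fin_cases r
    exacts [hlat.prefixDominates_two_one.orderEmbOfFin_lt (by decide) _ _ j,
      hlat.prefixDominates_one_zero.orderEmbOfFin_lt (by decide) _ _ j]

variable (T : SYT3 n)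

noncomputable def position : Fin (3 * n) ≃ Fin 3 × Fin n := (Equiv.ofBijective _ T.bij).symm

noncomputable def word (i : Fin (3 * n)) : Fin 3 := (T.position i).1.rev

lemma entry_position (i : Fin (3 * n)) : T.entry (T.position i).1 (T.position i).2 = i :=
  (Equiv.ofBijective _ T.bij).apply_symm_apply i

lemma position_entry (r : Fin 3) (j : Fin n) : T.position (T.entry r j) = (r, j) :=
  (Equiv.ofBijective _ T.bij).symm_apply_apply (r, j)

@[simp]
lemma word_entry (r : Fin 3) (j : Fin n) : T.word (T.entry r j) = r.rev := by
  simp [word, position_entry]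

lemma entry_of_word_eq {i : Fin (3 * n)} {r : Fin 3} (h : T.word i = r.rev) :
    T.entry r (T.position i).2 = i := by
  rw [← Fin.rev_inj.1 h]
  exact T.entry_position i

lemma positions_word (ℓ : Fin 3) : positions T.word ℓ = univ.image (T.entry ℓ.rev) := by
  ext i
  simp only [mem_positions, mem_image, mem_univ, true_and]
  exact ⟨fun h => ⟨_, T.entry_of_word_eq (by rwa [Fin.rev_rev])⟩, fun ⟨j, hj⟩ => hj ▸ by simp⟩

lemma word_hasRectangularContent : HasRectangularContent T.word := fun ℓ => by
  rw [positions_word, card_image_of_injective _ (T.row_inc _).injective, card_univ,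
    Fintype.card_fin]

/-- Column strictness: the entry of row `r` in the column of `i` precedes `i`. -/
lemma prefixDominates_word {r r' : Fin 3} (h : r < r') : PrefixDominates T.word r.rev r'.rev :=
  fun k => card_le_card_of_injOn (fun i => T.entry r (T.position i).2)
    (fun i hi => by
      simp only [coe_filter, mem_univ, true_and, Set.mem_ofPred_eq] at hi ⊢
      have hlt : T.entry r _ < T.entry r' _ := T.col_inc (T.position i).2 h
      rw [T.entry_of_word_eq hi.2] at hlt
      exact ⟨(Fin.lt_def.1 hlt).trans hi.1, T.word_entry _ _⟩)
    (fun i hi i' hi' he => by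
      simp only [coe_filter, mem_univ, true_and, Set.mem_ofPred_eq] at hi hi'
      rw [← T.entry_of_word_eq hi.2, ← T.entry_of_word_eq hi'.2, (T.row_inc r).injective he])

lemma word_isLatticeWord : IsLatticeWord T.word := fun k =>
  ⟨T.prefixDominates_word (show (0 : Fin 3) < 1 by decide) k,
    T.prefixDominates_word (show (1 : Fin 3) < 2 by decide) k⟩

lemma word_ofLatticeWord {w : Fin (3 * n) → Fin 3} (hlat : IsLatticeWord w)
    (hcnt : HasRectangularContent w) : (ofLatticeWord hlat hcnt).word = w := by
  funext i
  rw [← (ofLatticeWord hlat hcnt).entry_position i, word_entry]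
  exact (mem_positions.1 (orderEmbOfFin_mem _ _ _)).symm

lemma ofLatticeWord_word : ofLatticeWord T.word_isLatticeWord T.word_hasRectangularContent = T :=
  ext <| funext fun r => (orderEmbOfFin_unique _ (fun j => by simp) (T.row_inc r)).symm

noncomputable def equivLatticeWord : SYT3 n ≃ LatticeWord n where
  toFun T := ⟨T.word, T.word_isLatticeWord, T.word_hasRectangularContent⟩
  invFun w := ofLatticeWord w.2.1 w.2.2
  left_inv := ofLatticeWord_word
  right_inv w := Subtype.ext (word_ofLatticeWord w.2.1 w.2.2)

end SYT3

/-- Every lattice word with exactly `n` of each letter is the boundary word of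
some M-diagram on `3n` points; combined with injectivity, M-diagrams on `3n`
points are in bijection with standard Young tableaux of shape `(n,n,n)`. -/
theorem stmt11 (n : ℕ) :
    (∀ w : Fin (3 * n) → Fin 3, IsLatticeWord w →
      (∀ ℓ : Fin 3, (Finset.univ.filter (fun i => w i = ℓ)).card = n) →
      ∃ m : MDiagram n, mword m = w) ∧
    Nonempty (MDiagram n ≃ SYT3 n) :=
  ⟨fun _ hlat hcnt => ⟨MDiagram.ofLatticeWord hlat hcnt, MDiagram.mword_ofLatticeWord hlat hcnt⟩,
    ⟨MDiagram.equivLatticeWord.trans SYT3.equivLatticeWord.symm⟩⟩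
end
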